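/- arXiv:math/0212080 — 4 statements merged into one kernel-verified Lean document; each statement's English description precedes it below -/
import Mathlib

section
/- With L and ρ as above, det(∂²L/∂yⁱ∂yʲ) = (Σᵢ((xⁱ)² − (yⁱ)²)) / (Σᵢ((xⁱ)² + (yⁱ)²))^{n+1}. -/
/-!
On `{ρ > 0}` the `y`-gradient of `L` is `y / ρ`, so the `y`-Hessian is
`ρ⁻¹ (1 - (2 / ρ) y yᵀ)`, a multiple of a rank-one perturbation of the identity. The matrix
determinant lemma turns its determinant into `ρ⁻ⁿ (1 - 2 |y|² / ρ)`, and
`ρ - 2 |y|² = Σ ((xⁱ)² - (yⁱ)²)`.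
-/

open Finset Matrix Real

theorem Matrix.det_one_add_vecMulVec {m R : Type*} [Fintype m] [DecidableEq m] [CommRing R]
    (u v : m → R) : det (1 + vecMulVec u v) = 1 + v ⬝ᵥ u := by
  rw [vecMulVec_eq Unit, det_one_add_replicateCol_mul_replicateRow]

section

variable {n : ℕ}

noncomputable def sqNormProd (q : (Fin n → ℝ) × (Fin n → ℝ)) : ℝ :=
  ∑ i, (q.1 i ^ 2 + q.2 i ^ 2)

@[fun_prop]
theorem differentiable_sqNormProd : Differentiable ℝ (sqNormProd (n := n)) := by
  unfold sqNormProd; fun_prop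

theorem fderiv_sqNormProd_apply_single (p : (Fin n → ℝ) × (Fin n → ℝ)) (j : Fin n) :
    fderiv ℝ sqNormProd p (0, Pi.single j 1) = 2 * p.2 j := by
  unfold sqNormProd
  rw [fderiv_fun_sum fun i _ => by fun_prop]
  simp (disch := fun_prop) [fderiv_fun_add, fderiv_fun_pow, fderiv_apply, fderiv_fst, fderiv_snd,
    Pi.single_apply]

theorem fderiv_snd_apply_single (p : (Fin n → ℝ) × (Fin n → ℝ)) (i j : Fin n) :
    fderiv ℝ (fun q : (Fin n → ℝ) × (Fin n → ℝ) => q.2 j) p (0, Pi.single i 1) =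
      if i = j then 1 else 0 := by
  simp (disch := fun_prop) [fderiv_apply, fderiv_snd, Pi.single_apply, eq_comm]

theorem fderiv_half_log_sqNormProd_apply_single {p : (Fin n → ℝ) × (Fin n → ℝ)}
    (hp : sqNormProd p ≠ 0) (j : Fin n) :
    fderiv ℝ (fun q => 1 / 2 * log (sqNormProd q)) p (0, Pi.single j 1) = p.2 j / sqNormProd p := by
  rw [fderiv_const_mul (by fun_prop), fderiv.log (by fun_prop) hp]
  simp only [_root_.smul_apply, fderiv_sqNormProd_apply_single, smul_eq_mul]
  field_simp

theorem fderiv_snd_div_sqNormProd_apply_single {p : (Fin n → ℝ) × (Fin n → ℝ)}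
    (hp : sqNormProd p ≠ 0) (i j : Fin n) :
    fderiv ℝ (fun q => q.2 j / sqNormProd q) p (0, Pi.single i 1) =
      ((if i = j then sqNormProd p else 0) - 2 * p.2 i * p.2 j) / sqNormProd p ^ 2 := by
  have hinv : HasFDerivAt (fun q => (sqNormProd q)⁻¹)
      ((ContinuousLinearMap.toSpanSingleton ℝ (-(sqNormProd p ^ 2)⁻¹)).comp
        (fderiv ℝ sqNormProd p)) p :=
    (hasFDerivAt_inv hp).comp p (differentiable_sqNormProd p).hasFDerivAt
  simp only [div_eq_mul_inv]
  rw [fderiv_fun_mul (by fun_prop) hinv.differentiableAt, hinv.fderiv]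
  simp only [_root_.add_apply, _root_.smul_apply, ContinuousLinearMap.comp_apply,
    ContinuousLinearMap.toSpanSingleton_apply, smul_eq_mul, fderiv_sqNormProd_apply_single,
    fderiv_snd_apply_single]
  split_ifs <;> field_simp <;> ring

theorem hessian_half_log_sqNormProd {p : (Fin n → ℝ) × (Fin n → ℝ)} (hp : 0 < sqNormProd p) :
    (Matrix.of fun i j : Fin n =>
        fderiv ℝ (fun q => fderiv ℝ (fun q => 1 / 2 * log (sqNormProd q)) q (0, Pi.single j 1)) p
          (0, Pi.single i 1)) =
      (sqNormProd p)⁻¹ • (1 + vecMulVec p.2 (-(2 / sqNormProd p) • p.2)) := by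
  have hpos : ∀ᶠ q in nhds p, 0 < sqNormProd q :=
    continuousAt_const.eventually_lt differentiable_sqNormProd.continuous.continuousAt hp
  have hgrad : ∀ j : Fin n,
      (fun q => fderiv ℝ (fun q => 1 / 2 * log (sqNormProd q)) q (0, Pi.single j 1)) =ᶠ[nhds p]
        fun q => q.2 j / sqNormProd q :=
    fun j => hpos.mono fun q hq => fderiv_half_log_sqNormProd_apply_single hq.ne' j
  ext i j
  rw [of_apply, (hgrad j).fderiv_eq, fderiv_snd_div_sqNormProd_apply_single hp.ne']
  simp only [neg_smul, vecMulVec_neg, vecMulVec_smul, Matrix.smul_apply, Matrix.add_apply,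
    one_apply, Matrix.neg_apply, vecMulVec_apply, smul_eq_mul]
  split_ifs <;> field_simp <;> ring

theorem sum_sq_sub_sq_eq (p : (Fin n → ℝ) × (Fin n → ℝ)) :
    ∑ i, (p.1 i ^ 2 - p.2 i ^ 2) = sqNormProd p - 2 * (p.2 ⬝ᵥ p.2) := by
  simp only [sqNormProd, dotProduct, mul_sum, ← sum_sub_distrib]
  exact sum_congr rfl fun i _ => by ring

end

/-- For `L = (1/2) ln ρ`, `ρ = Σ ((xⁱ)² + (yⁱ)²) > 0`, the determinant of the
`y`-Hessian of `L` equals `(Σ ((xⁱ)² - (yⁱ)²)) / ρ^(n+1)`. -/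
theorem stmt6 (n : ℕ)
    (L ρ : ((Fin n → ℝ) × (Fin n → ℝ)) → ℝ)
    (hρ : ∀ p, ρ p = ∑ i : Fin n, ((p.1 i) ^ 2 + (p.2 i) ^ 2))
    (hL : ∀ p, L p = (1 / 2) * Real.log (ρ p)) :
    ∀ p, 0 < ρ p →
      (Matrix.of fun i j : Fin n =>
          fderiv ℝ (fun q => fderiv ℝ L q ((0 : Fin n → ℝ), Pi.single j (1 : ℝ))) p
            ((0 : Fin n → ℝ), Pi.single i (1 : ℝ))).det =
        (∑ i : Fin n, ((p.1 i) ^ 2 - (p.2 i) ^ 2)) / (ρ p) ^ (n + 1) := by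
  intro p hp
  obtain rfl : ρ = sqNormProd := funext hρ
  obtain rfl : L = fun q => 1 / 2 * log (sqNormProd q) := funext hL
  rw [hessian_half_log_sqNormProd hp, det_smul, det_one_add_vecMulVec, Fintype.card_fin,
    sum_sq_sub_sq_eq, smul_dotProduct, smul_eq_mul, inv_pow]
  field_simp
  ring
end

section
/- Suppose g and g' = f·g are two smooth families of symmetric nondegenerate n×n matrices (n > 1) on an open subset of ℝⁿ × ℝⁿ, both with totally symmetric derivative tensors C_{ijk} = ∂g_{jk}/∂yⁱ and C'_{ijk} = ∂g'_{jk}/∂yⁱ, where f > 0 is smooth. Then ∂f/∂yᵏ = 0 for all k, i.e. f depends only on x. -/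
/-- If `g` and `g' = f·g` are smooth families of symmetric nondegenerate `n×n`
matrices (`n ≥ 2`) with totally symmetric `y`-derivative tensors, and `f > 0` is
smooth, then `∂f/∂yᵏ = 0`, i.e. `f` depends only on `x`. -/
theorem stmt9 (n : ℕ) (hn : 2 ≤ n)
    (U : Set ((Fin n → ℝ) × (Fin n → ℝ))) (hU : IsOpen U)
    (g g' : ((Fin n → ℝ) × (Fin n → ℝ)) → Matrix (Fin n) (Fin n) ℝ)
    (f : ((Fin n → ℝ) × (Fin n → ℝ)) → ℝ)
    (hg : ∀ i j, ContDiffOn ℝ (⊤ : ℕ∞) (fun p => g p i j) U)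
    (hgsym : ∀ p ∈ U, ∀ i j, g p i j = g p j i)
    (hgnd : ∀ p ∈ U, (g p).det ≠ 0)
    (hf : ContDiffOn ℝ (⊤ : ℕ∞) f U) (hfpos : ∀ p ∈ U, 0 < f p)
    (hconf : ∀ p ∈ U, g' p = f p • g p)
    (hCg : ∀ p ∈ U, ∀ i j k,
      fderiv ℝ (fun q => g q j k) p ((0 : Fin n → ℝ), Pi.single i (1 : ℝ)) =
      fderiv ℝ (fun q => g q i k) p ((0 : Fin n → ℝ), Pi.single j (1 : ℝ)))
    (hCg' : ∀ p ∈ U, ∀ i j k,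
      fderiv ℝ (fun q => g' q j k) p ((0 : Fin n → ℝ), Pi.single i (1 : ℝ)) =
      fderiv ℝ (fun q => g' q i k) p ((0 : Fin n → ℝ), Pi.single j (1 : ℝ))) :
    ∀ p ∈ U, ∀ k : Fin n,
      fderiv ℝ f p ((0 : Fin n → ℝ), Pi.single k (1 : ℝ)) = 0 := by
  intro p hp k
  by_contra hk
  set D : Fin n → ℝ := fun i => fderiv ℝ f p ((0 : Fin n → ℝ), Pi.single i (1 : ℝ)) with hD
  have hpn : U ∈ nhds p := hU.mem_nhds hp
  have hfd : DifferentiableAt ℝ f p :=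
    ((hf.contDiffAt hpn).differentiableAt (by simp))
  have hgd : ∀ a b, DifferentiableAt ℝ (fun q => g q a b) p := fun a b =>
    (((hg a b).contDiffAt hpn).differentiableAt (by simp))
  have hEq : ∀ a b, fderiv ℝ (fun q => g' q a b) p
      = fderiv ℝ (fun q => f q * g q a b) p := by
    intro a b
    apply Filter.EventuallyEq.fderiv_eq
    filter_upwards [hpn] with q hq
    rw [hconf q hq]
    simp
  have hmul : ∀ a b, fderiv ℝ (fun q => f q * g q a b) p
      = f p • fderiv ℝ (fun q => g q a b) p + g p a b • fderiv ℝ f p :=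
    fun a b => fderiv_mul hfd (hgd a b)
  -- key identity
  have key : ∀ i j l, g p j l * D i = g p i l * D j := by
    intro i j l
    have h1 := hCg' p hp i j l
    rw [hEq, hEq, hmul, hmul] at h1
    simp only [ContinuousLinearMap.add_apply, ContinuousLinearMap.smul_apply,
      smul_eq_mul] at h1
    rw [hCg p hp i j l] at h1
    linarith [h1]
  -- rows of g p are proportional to row k
  have hrow : ∀ j l, g p j l = (D j / D k) * g p k l := by
    intro j l
    have := key k j l
    rw [div_mul_eq_mul_div, eq_div_iff (show D k ≠ 0 from hk)]
    linarith [this]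
  obtain ⟨i0, i1, hne⟩ : ∃ i0 i1 : Fin n, i0 ≠ i1 :=
    ⟨⟨0, by omega⟩, ⟨1, by omega⟩, by simp [Fin.ext_iff]⟩
  apply hgnd p hp
  by_cases h0 : D i0 = 0
  · apply Matrix.det_eq_zero_of_row_eq_zero i0
    intro l
    rw [hrow i0 l, h0]
    simp
  · have hrow1 : g p i1 = (D i1 / D i0) • g p i0 := by
      funext l
      simp only [Pi.smul_apply, smul_eq_mul]
      rw [hrow i1 l, hrow i0 l]
      field_simp
    have : g p = (g p).updateRow i1 ((D i1 / D i0) • g p i0) := by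
      rw [← hrow1, Matrix.updateRow_eq_self]
    rw [this, Matrix.det_updateRow_smul]
    have : ((g p).updateRow i1 (g p i0)).det = 0 := by
      apply Matrix.det_zero_of_row_eq hne.symm
      rw [Matrix.updateRow_self, Matrix.updateRow_ne hne]
    rw [this, mul_zero]
end

section
/- Let M be a smooth manifold with an integrable distribution T (the tangent distribution of a foliation) and a complementary distribution N, with projections p_N, p_T. Let ∇ be a torsion-free connection on M and define D by: D_Z₁ Z₂ = p_N ∇_{Z₁} Z₂, D_{Y₁} Y₂ = p_T ∇_{Y₁} Y₂, D_{Y₁} Z₂ = p_N [Y₁, Z₂], D_{Z₁} Y₂ = p_T [Z₁, Y₂] for Z₁, Z₂ sections of N and Y₁, Y₂ sections of T, extended by additivity. Then the torsion of D satisfies T_D(X, Y) = −p_T [p_N X, p_N Y] for all vector fields X, Y. -/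
/-- Lie bracket of vector fields on a normed space: `[X,Y] = DY·X - DX·Y`. -/
noncomputable def vbracket {E : Type*} [NormedAddCommGroup E] [NormedSpace ℝ E]
    (X Y : E → E) : E → E :=
  fun p => fderiv ℝ Y p (X p) - fderiv ℝ X p (Y p)

/-- Projection of a vector field onto the (tangent) distribution `T = im P`. -/
def pTan {E : Type*} [NormedAddCommGroup E] [NormedSpace ℝ E]
    (P : E → E →L[ℝ] E) (X : E → E) : E → E :=
  fun p => P p (X p)

/-- Projection of a vector field onto the (normal) distribution `N = ker P`. -/
def pNor {E : Type*} [NormedAddCommGroup E] [NormedSpace ℝ E]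
    (P : E → E →L[ℝ] E) (X : E → E) : E → E :=
  fun p => X p - P p (X p)

/-- The second canonical connection `D` built from a connection `∇` and the
decomposition `TM = N ⊕ T`:  `D_Z₁Z₂ = p_N ∇_{Z₁}Z₂`, `D_{Y₁}Y₂ = p_T ∇_{Y₁}Y₂`,
`D_{Y₁}Z₂ = p_N[Y₁,Z₂]`, `D_{Z₁}Y₂ = p_T[Z₁,Y₂]`, extended by additivity. -/
noncomputable def Dconn {E : Type*} [NormedAddCommGroup E] [NormedSpace ℝ E]
    (P : E → E →L[ℝ] E) (nab : (E → E) → (E → E) → (E → E)) (X Y : E → E) : E → E :=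
  pNor P (nab (pNor P X) (pNor P Y)) + pTan P (nab (pTan P X) (pTan P Y)) +
    pNor P (vbracket (pTan P X) (pNor P Y)) + pTan P (vbracket (pNor P X) (pTan P Y))

/-- Curvature of the connection `D`. -/
noncomputable def Rcurv {E : Type*} [NormedAddCommGroup E] [NormedSpace ℝ E]
    (P : E → E →L[ℝ] E) (nab : (E → E) → (E → E) → (E → E)) (X Y Z : E → E) : E → E :=
  Dconn P nab X (Dconn P nab Y Z) - Dconn P nab Y (Dconn P nab X Z) -
    Dconn P nab (vbracket X Y) Z

/-- If `∇` is torsion-free and `T` is integrable, the torsion of the second canonical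
connection `D` satisfies `T_D(X,Y) = -p_T[p_N X, p_N Y]`. -/
theorem stmt12 {E : Type*} [NormedAddCommGroup E] [NormedSpace ℝ E]
    (P : E → E →L[ℝ] E) (hP : ∀ p, (P p).comp (P p) = P p) (hPsm : ContDiff ℝ (⊤ : ℕ∞) P)
    (nab : (E → E) → (E → E) → (E → E))
    (hadd1 : ∀ X Y Z : E → E, nab (X + Y) Z = nab X Z + nab Y Z)
    (hadd2 : ∀ X Y Z : E → E, nab X (Y + Z) = nab X Y + nab X Z)
    (hsmul1 : ∀ (f : E → ℝ) (X Y : E → E) (p : E),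
      nab (fun q => f q • X q) Y p = f p • nab X Y p)
    (htf : ∀ X Y : E → E, ContDiff ℝ (⊤ : ℕ∞) X → ContDiff ℝ (⊤ : ℕ∞) Y →
      ∀ p, nab X Y p - nab Y X p = vbracket X Y p)
    (hint : ∀ X Y : E → E, (∀ p, X p - P p (X p) = 0) → (∀ p, Y p - P p (Y p) = 0) →
      ∀ p, vbracket X Y p - P p (vbracket X Y p) = 0) :
    ∀ X Y : E → E, ContDiff ℝ (⊤ : ℕ∞) X → ContDiff ℝ (⊤ : ℕ∞) Y → ∀ p,
      Dconn P nab X Y p - Dconn P nab Y X p - vbracket X Y p =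
        -(P p (vbracket (pNor P X) (pNor P Y) p)) := by
  intro X Y hX hY p
  have hTX : ContDiff ℝ (⊤ : ℕ∞) (pTan P X) := hPsm.clm_apply hX
  have hTY : ContDiff ℝ (⊤ : ℕ∞) (pTan P Y) := hPsm.clm_apply hY
  have hNX : ContDiff ℝ (⊤ : ℕ∞) (pNor P X) := hX.sub hTX
  have hNY : ContDiff ℝ (⊤ : ℕ∞) (pNor P Y) := hY.sub hTY
  -- torsion-free identities
  have h1 := htf (pNor P X) (pNor P Y) hNX hNY p
  have h2 := htf (pTan P X) (pTan P Y) hTX hTY p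
  -- integrability of the tangent distribution
  have h4 : vbracket (pTan P X) (pTan P Y) p
      - P p (vbracket (pTan P X) (pTan P Y) p) = 0 := by
    refine hint _ _ (fun q => ?_) (fun q => ?_) p
    · show P q (X q) - P q (P q (X q)) = 0
      rw [sub_eq_zero]
      exact (ContinuousLinearMap.ext_iff.mp (hP q) (X q)).symm
    · show P q (Y q) - P q (P q (Y q)) = 0
      rw [sub_eq_zero]
      exact (ContinuousLinearMap.ext_iff.mp (hP q) (Y q)).symm
  -- splitting the bracket
  have hsplit : vbracket X Y p = vbracket (pNor P X) (pNor P Y) p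
      + vbracket (pNor P X) (pTan P Y) p + vbracket (pTan P X) (pNor P Y) p
      + vbracket (pTan P X) (pTan P Y) p := by
    have hfX : fderiv ℝ X p = fderiv ℝ (pNor P X) p + fderiv ℝ (pTan P X) p := by
      have h := fderiv_fun_add (𝕜 := ℝ) (x := p)
        ((hNX.differentiable (by simp)).differentiableAt)
        ((hTX.differentiable (by simp)).differentiableAt)
      have heq : (fun y => pNor P X y + pTan P X y) = X := by
        funext q; simp [pNor, pTan]
      rw [heq] at h; exact h
    have hfY : fderiv ℝ Y p = fderiv ℝ (pNor P Y) p + fderiv ℝ (pTan P Y) p := by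
      have h := fderiv_fun_add (𝕜 := ℝ) (x := p)
        ((hNY.differentiable (by simp)).differentiableAt)
        ((hTY.differentiable (by simp)).differentiableAt)
      have heq : (fun y => pNor P Y y + pTan P Y y) = Y := by
        funext q; simp [pNor, pTan]
      rw [heq] at h; exact h
    have hXp : X p = pNor P X p + pTan P X p := by simp [pNor, pTan]
    have hYp : Y p = pNor P Y p + pTan P Y p := by simp [pNor, pTan]
    show fderiv ℝ Y p (X p) - fderiv ℝ X p (Y p) = _
    rw [hfX, hfY, hXp, hYp]
    simp only [vbracket, ContinuousLinearMap.add_apply, map_add]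
    abel
  have hNapp : ∀ (Z : E → E) (q : E), pNor P Z q = Z q - P q (Z q) := fun _ _ => rfl
  have hTapp : ∀ (Z : E → E) (q : E), pTan P Z q = P q (Z q) := fun _ _ => rfl
  have hanti1 : vbracket (pTan P Y) (pNor P X) p
      = -vbracket (pNor P X) (pTan P Y) p := (neg_sub _ _).symm
  have hanti2 : vbracket (pNor P Y) (pTan P X) p
      = -vbracket (pTan P X) (pNor P Y) p := (neg_sub _ _).symm
  have e1 : nab (pNor P X) (pNor P Y) p
      = vbracket (pNor P X) (pNor P Y) p + nab (pNor P Y) (pNor P X) p :=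
    eq_add_of_sub_eq h1
  have e2 : nab (pTan P X) (pTan P Y) p
      = vbracket (pTan P X) (pTan P Y) p + nab (pTan P Y) (pTan P X) p :=
    eq_add_of_sub_eq h2
  have e4 : P p (vbracket (pTan P X) (pTan P Y) p)
      = vbracket (pTan P X) (pTan P Y) p := (sub_eq_zero.mp h4).symm
  simp only [Dconn, Pi.add_apply]
  simp only [hNapp, hTapp]
  rw [hanti1, hanti2, e1, e2, hsplit]
  simp only [map_add, map_neg, e4]
  abel
end

section
/- With D the second canonical connection as above on (M, γ, N ⊕ T), for sections X, Y, Z, U of N: R_D(X,Y,Z,U) + R_D(Y,X,Z,U) = (D_{p_T[Z,U]} γ)(X, Y), where R_D(X,Y,Z,U) = γ(R_D(Z,U)Y, X). -/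
/-- For the second canonical connection `D` of `(M, γ, N ⊕ T)` (built from the
Levi-Civita connection `∇` of `γ`), and sections `X, Y, Z, U` of `N`:
`R_D(X,Y,Z,U) + R_D(Y,X,Z,U) = (D_{p_T[Z,U]} γ)(X,Y)`, where
`R_D(X,Y,Z,U) = γ(R_D(Z,U)Y, X)`. -/
theorem stmt15 {E : Type*} [NormedAddCommGroup E] [NormedSpace ℝ E]
    (P : E → E →L[ℝ] E) (hP : ∀ p, (P p).comp (P p) = P p) (hPsm : ContDiff ℝ (⊤ : ℕ∞) P)
    (γ : E → E →L[ℝ] E →L[ℝ] ℝ) (hγsm : ContDiff ℝ (⊤ : ℕ∞) γ)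
    (hγsym : ∀ p u v, γ p u v = γ p v u)
    (hγnd : ∀ p u, (∀ v, γ p u v = 0) → u = 0)
    (horth : ∀ p u v, γ p (P p u) (v - P p v) = 0)
    (nab : (E → E) → (E → E) → (E → E))
    (hadd1 : ∀ X Y Z : E → E, nab (X + Y) Z = nab X Z + nab Y Z)
    (hadd2 : ∀ X Y Z : E → E, nab X (Y + Z) = nab X Y + nab X Z)
    (hsmul1 : ∀ (f : E → ℝ) (X Y : E → E) (p : E),
      nab (fun q => f q • X q) Y p = f p • nab X Y p)
    (hleib : ∀ (f : E → ℝ) (X Y : E → E), ContDiff ℝ (⊤ : ℕ∞) f → ContDiff ℝ (⊤ : ℕ∞) X →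
      ContDiff ℝ (⊤ : ℕ∞) Y → ∀ p,
      nab X (fun q => f q • Y q) p = f p • nab X Y p + fderiv ℝ f p (X p) • Y p)
    (htf : ∀ X Y : E → E, ContDiff ℝ (⊤ : ℕ∞) X → ContDiff ℝ (⊤ : ℕ∞) Y →
      ∀ p, nab X Y p - nab Y X p = vbracket X Y p)
    (hmetric : ∀ X Y Z : E → E, ContDiff ℝ (⊤ : ℕ∞) X → ContDiff ℝ (⊤ : ℕ∞) Y → ContDiff ℝ (⊤ : ℕ∞) Z →
      ∀ p, fderiv ℝ (fun q => γ q (Y q) (Z q)) p (X p) =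
        γ p (nab X Y p) (Z p) + γ p (Y p) (nab X Z p))
    (hnabsm : ∀ X Y : E → E, ContDiff ℝ (⊤ : ℕ∞) X → ContDiff ℝ (⊤ : ℕ∞) Y →
      ContDiff ℝ (⊤ : ℕ∞) (nab X Y)) :
    ∀ X Y Z U : E → E, ContDiff ℝ (⊤ : ℕ∞) X → ContDiff ℝ (⊤ : ℕ∞) Y → ContDiff ℝ (⊤ : ℕ∞) Z →
      ContDiff ℝ (⊤ : ℕ∞) U →
      (∀ p, P p (X p) = 0) → (∀ p, P p (Y p) = 0) → (∀ p, P p (Z p) = 0) →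
      (∀ p, P p (U p) = 0) →
      ∀ p, γ p (Rcurv P nab Z U Y p) (X p) + γ p (Rcurv P nab Z U X p) (Y p) =
        fderiv ℝ (fun q => γ q (X q) (Y q)) p (P p (vbracket Z U p)) -
          γ p (Dconn P nab (pTan P (vbracket Z U)) X p) (Y p) -
          γ p (X p) (Dconn P nab (pTan P (vbracket Z U)) Y p) := by
  
  intro X Y Z U hX hY hZ hU hXN hYN hZN hUN p
  -- pointwise algebraic facts
  have hPP : ∀ (q : E) v, P q (P q v) = P q v := fun q v => by
    have h := congrArg (fun L : E →L[ℝ] E => L v) (hP q)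
    simpa using h
  have hγ0 : ∀ (q : E) v w, P q w = 0 → γ q (P q v) w = 0 := fun q v w hw => by
    have h := horth q v w
    rwa [hw, sub_zero] at h
  have hγdrop : ∀ (q : E) v w, P q w = 0 → γ q (v - P q v) w = γ q v w := fun q v w hw => by
    rw [map_sub, ContinuousLinearMap.sub_apply, hγ0 q v w hw, sub_zero]
  have hnab0l : ∀ V : E → E, nab 0 V = 0 := fun V => by
    have h := hadd1 0 0 V
    rw [add_zero] at h
    exact left_eq_add.mp h
  have hnab0r : ∀ V : E → E, nab V 0 = 0 := fun V => by
    have h := hadd2 V 0 0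
    rw [add_zero] at h
    exact left_eq_add.mp h
  have hvb0l : ∀ V : E → E, vbracket 0 V = 0 := fun V => funext fun q => by
    show fderiv ℝ V q ((0 : E → E) q) - fderiv ℝ (fun _ => (0 : E)) q (V q) = (0 : E → E) q
    rw [fderiv_const_apply]
    simp
  have hvb0r : ∀ V : E → E, vbracket V 0 = 0 := fun V => funext fun q => by
    show fderiv ℝ (fun _ => (0 : E)) q (V q) - fderiv ℝ V q ((0 : E → E) q) = (0 : E → E) q
    rw [fderiv_const_apply]
    simp
  have hpNorId : ∀ V : E → E, (∀ q, P q (V q) = 0) → pNor P V = V := fun V h =>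
    funext fun q => by simp [pNor, h q]
  have hpTan0 : ∀ V : E → E, (∀ q, P q (V q) = 0) → pTan P V = 0 := fun V h =>
    funext fun q => h q
  have hpNorZ : pNor P 0 = 0 := funext fun q => by simp [pNor]
  have hpTanZ : pTan P 0 = 0 := funext fun q => by simp [pTan]
  have hNorN : ∀ (V : E → E) (q : E), P q (pNor P V q) = 0 := fun V q => by
    simp [pNor, map_sub, hPP]
  set vb := vbracket Z U with hvbdef
  set T := pTan P vb with hTdef
  set B := pNor P vb with hBdef
  have hTN : pNor P T = 0 := funext fun q => by
    rw [hTdef]; simp [pNor, pTan, hPP]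
  have hTT : pTan P T = T := funext fun q => by
    rw [hTdef]; simp [pTan, hPP]
  have hTp : ∀ q, P q (vb q) = T q := fun q => by rw [hTdef]; rfl
  -- Dconn simplifications
  have hD1 : ∀ A W : E → E, (∀ q, P q (A q) = 0) → (∀ q, P q (W q) = 0) →
      Dconn P nab A W = pNor P (nab A W) := by
    intro A W hA hW
    unfold Dconn
    simp only [hpNorId A hA, hpNorId W hW, hpTan0 A hA, hpTan0 W hW, hnab0l, hvb0l, hvb0r,
      hpNorZ, hpTanZ, add_zero]
  have hD2 : ∀ W : E → E, (∀ q, P q (W q) = 0) →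
      Dconn P nab T W = pNor P (vbracket T W) := by
    intro W hW
    unfold Dconn
    simp only [hTN, hTT, hpNorId W hW, hpTan0 W hW, hnab0l, hnab0r, hvb0l, hvb0r,
      hpNorZ, hpTanZ, add_zero, zero_add]
  have hD3 : ∀ W : E → E, (∀ q, P q (W q) = 0) →
      Dconn P nab vb W = pNor P (nab B W) + pNor P (vbracket T W) := by
    intro W hW
    unfold Dconn
    simp only [← hBdef, ← hTdef, hpNorId W hW, hpTan0 W hW, hnab0r, hvb0r, hpTanZ, add_zero]
  -- smoothness
  have hpNorSm : ∀ V : E → E, ContDiff ℝ (⊤ : ℕ∞) V → ContDiff ℝ (⊤ : ℕ∞) (pNor P V) := fun V h =>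
    h.sub (hPsm.clm_apply h)
  have hvbSm : ∀ V W : E → E, ContDiff ℝ (⊤ : ℕ∞) V → ContDiff ℝ (⊤ : ℕ∞) W →
      ContDiff ℝ (⊤ : ℕ∞) (vbracket V W) := fun V W hV hW =>
    ((hW.fderiv_right (by simp)).clm_apply hV).sub ((hV.fderiv_right (by simp)).clm_apply hW)
  have hvbZU : ContDiff ℝ (⊤ : ℕ∞) vb := hvbSm Z U hZ hU
  have hBsm : ContDiff ℝ (⊤ : ℕ∞) B := hpNorSm _ hvbZU
  -- metric compatibility of D along arbitrary directions, for normal sections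
  have hmet : ∀ A V W : E → E, ContDiff ℝ (⊤ : ℕ∞) A → ContDiff ℝ (⊤ : ℕ∞) V → ContDiff ℝ (⊤ : ℕ∞) W →
      (∀ q, P q (V q) = 0) → (∀ q, P q (W q) = 0) → ∀ q,
      fderiv ℝ (fun r => γ r (V r) (W r)) q (A q) =
        γ q (pNor P (nab A V) q) (W q) + γ q (V q) (pNor P (nab A W) q) := by
    intro A V W hA hV hW hVn hWn q
    rw [hmetric A V W hA hV hW q]
    have e1 : γ q (pNor P (nab A V) q) (W q) = γ q (nab A V q) (W q) :=
      hγdrop q _ _ (hWn q)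
    have e2 : γ q (V q) (pNor P (nab A W) q) = γ q (V q) (nab A W q) := by
      rw [hγsym q (V q) (pNor P (nab A W) q), hγsym q (V q) (nab A W q)]
      exact hγdrop q _ _ (hVn q)
    rw [e1, e2]
  set F := fun q => γ q (X q) (Y q) with hFdef
  have hFsm : ContDiff ℝ (⊤ : ℕ∞) F := (hγsm.clm_apply hX).clm_apply hY
  have hF'sm : ContDiff ℝ (⊤ : ℕ∞) (fderiv ℝ F) := hFsm.fderiv_right (by simp)
  have hd2 : ∀ A C : E → E, ContDiff ℝ (⊤ : ℕ∞) A → ContDiff ℝ (⊤ : ℕ∞) C → ∀ q,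
      fderiv ℝ (fun r => fderiv ℝ F r (C r)) q (A q) =
        fderiv ℝ (fderiv ℝ F) q (A q) (C q) + fderiv ℝ F q (fderiv ℝ C q (A q)) := by
    intro A C hA hC q
    rw [fderiv_clm_apply (hF'sm.differentiable (by simp) q) (hC.differentiable (by simp) q)]
    simp only [ContinuousLinearMap.add_apply, ContinuousLinearMap.comp_apply,
      ContinuousLinearMap.flip_apply]
    ring
  have hsymm : IsSymmSndFDerivAt ℝ F p := (hFsm.contDiffAt (x := p)).isSymmSndFDerivAt (by rw [minSmoothness_of_isRCLikeNormedField]; exact WithTop.coe_le_coe.mpr (le_top : (2 : ℕ∞) ≤ ⊤))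
  have hcomm : fderiv ℝ (fun r => fderiv ℝ F r (U r)) p (Z p) -
      fderiv ℝ (fun r => fderiv ℝ F r (Z r)) p (U p) = fderiv ℝ F p (vb p) := by
    rw [hd2 Z U hZ hU p, hd2 U Z hU hZ p, hsymm.eq (U p) (Z p)]
    have hv : vb p = fderiv ℝ U p (Z p) - fderiv ℝ Z p (U p) := rfl
    rw [hv, map_sub]
    ring
  -- second order expansion
  have e2nd : ∀ A C : E → E, ContDiff ℝ (⊤ : ℕ∞) A → ContDiff ℝ (⊤ : ℕ∞) C →
      (∀ q, P q (A q) = 0) → (∀ q, P q (C q) = 0) →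
      fderiv ℝ (fun r => fderiv ℝ F r (C r)) p (A p) =
        γ p (pNor P (nab A (pNor P (nab C X))) p) (Y p) +
          γ p (pNor P (nab C X) p) (pNor P (nab A Y) p) +
        (γ p (pNor P (nab A X) p) (pNor P (nab C Y) p) +
          γ p (X p) (pNor P (nab A (pNor P (nab C Y))) p)) := by
    intro A C hA hC hAn hCn
    have hCXsm : ContDiff ℝ (⊤ : ℕ∞) (pNor P (nab C X)) := hpNorSm _ (hnabsm C X hC hX)
    have hCYsm : ContDiff ℝ (⊤ : ℕ∞) (pNor P (nab C Y)) := hpNorSm _ (hnabsm C Y hC hY)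
    have hfun : (fun r => fderiv ℝ F r (C r)) =
        fun r => γ r (pNor P (nab C X) r) (Y r) + γ r (X r) (pNor P (nab C Y) r) := by
      funext r
      rw [hFdef]
      exact hmet C X Y hC hX hY hXN hYN r
    rw [hfun, fderiv_fun_add (((hγsm.clm_apply hCXsm).clm_apply hY).differentiable (by simp) p)
        (((hγsm.clm_apply hX).clm_apply hCYsm).differentiable (by simp) p),
      ContinuousLinearMap.add_apply,
      hmet A (pNor P (nab C X)) Y hA hCXsm hY (hNorN _) hYN p,
      hmet A X (pNor P (nab C Y)) hA hX hCYsm hXN (hNorN _) p]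
  have S1 := e2nd Z U hZ hU hZN hUN
  have S2 := e2nd U Z hU hZ hUN hZN
  have eB : fderiv ℝ F p (B p) =
      γ p (pNor P (nab B X) p) (Y p) + γ p (X p) (pNor P (nab B Y) p) := by
    rw [hFdef]
    exact hmet B X Y hBsm hX hY hXN hYN p
  have esplit : fderiv ℝ F p (vb p) = fderiv ℝ F p (B p) + fderiv ℝ F p (T p) := by
    have hvbp : vb p = B p + T p := by rw [hBdef, hTdef]; simp [pNor, pTan]
    rw [hvbp, map_add]
  -- rewrite the goal
  rw [hTp p, hD2 X hXN, hD2 Y hYN]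
  unfold Rcurv
  simp only [← hvbdef]
  rw [hD1 U Y hUN hYN, hD1 Z Y hZN hYN, hD1 U X hUN hXN, hD1 Z X hZN hXN,
    hD3 Y hYN, hD3 X hXN,
    hD1 Z (pNor P (nab U Y)) hZN (hNorN _), hD1 U (pNor P (nab Z Y)) hUN (hNorN _),
    hD1 Z (pNor P (nab U X)) hZN (hNorN _), hD1 U (pNor P (nab Z X)) hUN (hNorN _)]
  simp only [Pi.sub_apply, Pi.add_apply, map_sub, map_add,
    ContinuousLinearMap.sub_apply, ContinuousLinearMap.add_apply]
  have sym1 := hγsym p (pNor P (nab Z (pNor P (nab U Y))) p) (X p)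
  have sym2 := hγsym p (pNor P (nab U (pNor P (nab Z Y))) p) (X p)
  have sym3 := hγsym p (pNor P (nab B Y) p) (X p)
  have sym4 := hγsym p (pNor P (vbracket T Y) p) (X p)
  linarith [S1, S2, hcomm, eB, esplit, sym1, sym2, sym3, sym4]
end
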